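/- Let ψ: F_n → SL(2,ℤ) send t_i to A = [[1,1],[0,1]] for i odd and to B = [[1,0],[-1,1]] for i even, and let χ: F_n → PSL(2,ℤ) be the composition with the projection. If a braid β stabilizes χ under the Hurwitz action, then β stabilizes ψ: indeed, for each i there is ε_i ∈ {±1} with (β·ψ)(t_i) = ε_i·ψ(t_i), and since trace((β·ψ)(t_i)) = 2 (each entry of the Hurwitz-transformed tuple is conjugate to A or B, which have trace 2) while trace(-ψ(t_i)) = -2, all ε_i = 1. -/

import Mathlib

/-!
Every entry of a Hurwitz-transformed tuple is conjugate to an entry of the original tuple, so all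
entries of `β·ψ` have trace `2`, like `A` and `B`. If `β·χ = χ`, then `(β·ψ)(t_i) = ±ψ(t_i)`
because the centre of `SL(2,ℤ)` is `{±I}`; the sign `-` would give trace `-2`.
-/

/-- The local monodromy matrix of an `I₁` fibre. -/
def A : Matrix.SpecialLinearGroup (Fin 2) ℤ :=
  ⟨!![1, 1; 0, 1], by norm_num [Matrix.det_fin_two_of]⟩

/-- The other local monodromy matrix of an `I₁` fibre. -/
def B : Matrix.SpecialLinearGroup (Fin 2) ℤ :=
  ⟨!![1, 0; -1, 1], by norm_num [Matrix.det_fin_two_of]⟩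

/-- The homomorphism `ψ : F_n → SL(2,ℤ)`, recorded by the images of the free
generators: `t_i ↦ A` for `i` odd and `t_i ↦ B` for `i` even (with `0`-based
indexing, index `i` corresponds to the generator `t_{i+1}`). -/
def ψ : ℕ → Matrix.SpecialLinearGroup (Fin 2) ℤ := fun i => if i % 2 = 0 then A else B

/-- The Hurwitz action of the braid generator `σ_i`. -/
def hAct {G : Type*} [Group G] (i : ℕ) (g : ℕ → G) : ℕ → G := fun j =>
  if j = i then g i * g (i + 1) * (g i)⁻¹ else if j = i + 1 then g i else g j

/-- The Hurwitz action of the inverse braid generator `σ_i⁻¹`. -/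
def hActInv {G : Type*} [Group G] (i : ℕ) (g : ℕ → G) : ℕ → G := fun j =>
  if j = i then g (i + 1) else if j = i + 1 then (g (i + 1))⁻¹ * g i * g (i + 1) else g j

/-- The Hurwitz action of a single braid letter. -/
def hw {G : Type*} [Group G] (l : ℕ × Bool) : (ℕ → G) → (ℕ → G) :=
  if l.2 then hAct l.1 else hActInv l.1

/-- The Hurwitz action of a braid word. -/
def hwList {G : Type*} [Group G] : List (ℕ × Bool) → (ℕ → G) → (ℕ → G)
  | [] => id
  | l :: w => hw l ∘ hwList w

namespace Matrix.SpecialLinearGroup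

variable {n R : Type*} [Fintype n] [DecidableEq n] [CommRing R]

lemma trace_eq_of_isConj {g h : SpecialLinearGroup n R} (hgh : IsConj g h) :
    trace (g : Matrix n n R) = trace (h : Matrix n n R) := by
  obtain ⟨c, rfl⟩ := isConj_iff.mp hgh
  rw [coe_mul, coe_mul, trace_mul_cycle, ← coe_mul, inv_mul_cancel, coe_one, one_mul]

lemma exists_coe_eq_smul_of_mk_center_eq {g h : SpecialLinearGroup n R}
    (hgh : (g : SpecialLinearGroup n R ⧸ Subgroup.center (SpecialLinearGroup n R)) = h) :
    ∃ r : R, r ^ Fintype.card n = 1 ∧ (h : Matrix n n R) = r • (g : Matrix n n R) := by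
  obtain ⟨r, hr, hscalar⟩ := mem_center_iff.mp (QuotientGroup.eq.mp hgh)
  refine ⟨r, hr, ?_⟩
  rw [← mul_inv_cancel_left g h, coe_mul, ← hscalar, scalar_apply, ← smul_one_eq_diagonal,
    Matrix.mul_smul, mul_one]

lemma eq_of_mk_center_eq_of_trace_eq [IsDomain R] [CharZero R] {g h : SpecialLinearGroup (Fin 2) R}
    (hgh : (g : SpecialLinearGroup (Fin 2) R ⧸ Subgroup.center (SpecialLinearGroup (Fin 2) R)) = h)
    (htr : trace (g : Matrix (Fin 2) (Fin 2) R) = trace (h : Matrix (Fin 2) (Fin 2) R))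
    (hne : trace (g : Matrix (Fin 2) (Fin 2) R) ≠ 0) :
    g = h := by
  obtain ⟨r, hr, hrg⟩ := exists_coe_eq_smul_of_mk_center_eq hgh
  rw [Fintype.card_fin, sq, mul_self_eq_one_iff] at hr
  rcases hr with rfl | rfl
  · exact Subtype.ext (by rw [hrg, one_smul])
  · rw [hrg, neg_one_smul, trace_neg, CharZero.eq_neg_self_iff] at htr
    exact absurd htr hne

end Matrix.SpecialLinearGroup

section Hurwitz

variable {G : Type*} [Group G]

lemma exists_isConj_hw_apply (l : ℕ × Bool) (g : ℕ → G) (k : ℕ) :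
    ∃ j, IsConj (g j) (hw l g k) := by
  obtain ⟨i, _ | _⟩ := l <;>
    simp only [hw, hAct, hActInv, Bool.false_eq_true, if_true, if_false] <;> split_ifs
  · exact ⟨i + 1, .refl _⟩
  · exact ⟨i, isConj_iff.mpr ⟨(g (i + 1))⁻¹, by group⟩⟩
  · exact ⟨k, .refl _⟩
  · exact ⟨i + 1, isConj_iff.mpr ⟨g i, rfl⟩⟩
  · exact ⟨i, .refl _⟩
  · exact ⟨k, .refl _⟩

lemma exists_isConj_hwList_apply (w : List (ℕ × Bool)) (g : ℕ → G) (k : ℕ) :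
    ∃ j, IsConj (g j) (hwList w g k) := by
  induction w generalizing k with
  | nil => exact ⟨k, IsConj.refl _⟩
  | cons l w ih =>
    obtain ⟨j, hj⟩ := exists_isConj_hw_apply l (hwList w g) k
    obtain ⟨m, hm⟩ := ih j
    exact ⟨m, hm.trans hj⟩

end Hurwitz

lemma trace_ψ (i : ℕ) : Matrix.trace (ψ i : Matrix (Fin 2) (Fin 2) ℤ) = 2 := by
  unfold ψ
  split_ifs <;> simp [A, B, Matrix.trace_fin_two]

theorem stabilizer_PSL_eq_stabilizer_SL_general (w : List (ℕ × Bool))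
    (hχ : ∀ i : ℕ,
      (QuotientGroup.mk (hwList w ψ i) :
          Matrix.SpecialLinearGroup (Fin 2) ℤ ⧸
            Subgroup.center (Matrix.SpecialLinearGroup (Fin 2) ℤ)) =
        QuotientGroup.mk (ψ i)) :
    hwList w ψ = ψ := by
  funext k
  obtain ⟨j, hj⟩ := exists_isConj_hwList_apply w ψ k
  refine Matrix.SpecialLinearGroup.eq_of_mk_center_eq_of_trace_eq (hχ k) ?_ ?_
  · rw [← Matrix.SpecialLinearGroup.trace_eq_of_isConj hj, trace_ψ, trace_ψ]
  · rw [← Matrix.SpecialLinearGroup.trace_eq_of_isConj hj, trace_ψ]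
    exact two_ne_zero

/-- Let `χ : F_n → PSL(2,ℤ)` be the composition of `ψ` with the projection
`SL(2,ℤ) → PSL(2,ℤ) = SL(2,ℤ)/{±I}`. If a braid `β` (a word `w` in the
generators `σ_i`, `i + 1 < n`, and their inverses) stabilizes `χ` under the
Hurwitz action, then `β` already stabilizes `ψ`: each `(β·ψ)(t_i) = ε_i ψ(t_i)`
with `ε_i = ±1`, and the trace argument (conjugates of `A`, `B` have trace `2`
while `-ψ(t_i)` has trace `-2`) forces `ε_i = 1` for all `i`. -/
theorem stabilizer_PSL_eq_stabilizer_SL (n : ℕ) (w : List (ℕ × Bool))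
    (hwn : ∀ l ∈ w, l.1 + 1 < n)
    (hχ : ∀ i : ℕ,
      (QuotientGroup.mk (hwList w ψ i) :
          Matrix.SpecialLinearGroup (Fin 2) ℤ ⧸
            Subgroup.center (Matrix.SpecialLinearGroup (Fin 2) ℤ)) =
        QuotientGroup.mk (ψ i)) :
    hwList w ψ = ψ :=
  stabilizer_PSL_eq_stabilizer_SL_general w hχ
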